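/- For points x, y in a topological space X, if x ∈ e*-cl_θ({y}) then y ∈ e*-cl_θ({x}). -/

import Mathlib

/-!
If `y ∉ e*-cl_θ {x}`, pick an e*-open `V ∋ y` with `x ∉ e*-cl V`. Since e*-open sets are closed
under unions, `e*-cl V` is e*-closed, so `(e*-cl V)ᶜ` is an e*-open neighbourhood of `x`; its
e*-closure lies in the e*-closed set `Vᶜ` and therefore misses `y`, i.e. `x ∉ e*-cl_θ {y}`.
-/

open Set Topology

variable {X : Type*} [TopologicalSpace X]

/-- δ-closure of A. -/
def deltaCl (A : Set X) : Set X :=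
  {x | ∀ U : Set X, IsOpen U → x ∈ U → (interior (closure U) ∩ A).Nonempty}

/-- A is e*-open if A ⊆ cl(int(δ-cl A)). -/
def EStarOpen (A : Set X) : Prop := A ⊆ closure (interior (deltaCl A))

/-- A is e*-closed if its complement is e*-open. -/
def EStarClosed (A : Set X) : Prop := EStarOpen Aᶜ

/-- e*-closure: intersection of all e*-closed supersets. -/
def eStarCl (A : Set X) : Set X := ⋂₀ {F | EStarClosed F ∧ A ⊆ F}

/-- e*-interior: union of all e*-open subsets. -/
def eStarInt (A : Set X) : Set X := ⋃₀ {U | EStarOpen U ∧ U ⊆ A}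

/-- e*-regular: both e*-open and e*-closed. -/
def EStarRegular (A : Set X) : Prop := EStarOpen A ∧ EStarClosed A

/-- e*-θ-closure. -/
def eStarClTheta (A : Set X) : Set X :=
  {x | ∀ U : Set X, EStarOpen U → x ∈ U → (eStarCl U ∩ A).Nonempty}

/-- e*-θ-closed. -/
def EStarThetaClosed (A : Set X) : Prop := A = eStarClTheta A

/-- e*-θ-open. -/
def EStarThetaOpen (A : Set X) : Prop := EStarThetaClosed Aᶜ

/-- quasi e*-θ-closed. -/
def QEStarThetaClosed (A : Set X) : Prop :=
  ∀ U : Set X, EStarThetaOpen U → A ⊆ U → eStarClTheta A ⊆ U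

/-- e*-θ-kernel. -/
def eStarKerTheta (A : Set X) : Set X := ⋂₀ {U | EStarThetaOpen U ∧ A ⊆ U}

lemma deltaCl_mono {A B : Set X} (hAB : A ⊆ B) : deltaCl A ⊆ deltaCl B :=
  fun _ hx U hU hxU => (hx U hU hxU).mono (inter_subset_inter_right _ hAB)

lemma eStarOpen_sUnion {S : Set (Set X)} (hS : ∀ U ∈ S, EStarOpen U) : EStarOpen (⋃₀ S) := by
  rintro x ⟨U, hUS, hxU⟩
  exact closure_mono (interior_mono (deltaCl_mono (subset_sUnion_of_mem hUS))) (hS U hUS hxU)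

lemma EStarOpen.eStarClosed_compl {V : Set X} (hV : EStarOpen V) : EStarClosed Vᶜ := by
  rwa [EStarClosed, compl_compl]

lemma eStarClosed_eStarCl (A : Set X) : EStarClosed (eStarCl A) := by
  rw [EStarClosed, eStarCl, compl_sInter]
  apply eStarOpen_sUnion
  rintro _ ⟨F, ⟨hF, -⟩, rfl⟩
  exact hF

lemma subset_eStarCl (A : Set X) : A ⊆ eStarCl A :=
  fun _ ha _ hF => hF.2 ha

lemma eStarCl_subset {A F : Set X} (hF : EStarClosed F) (hAF : A ⊆ F) : eStarCl A ⊆ F :=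
  fun _ hx => hx F ⟨hF, hAF⟩

lemma eStarCl_compl_eStarCl_subset {V : Set X} (hV : EStarOpen V) :
    eStarCl (eStarCl V)ᶜ ⊆ Vᶜ :=
  eStarCl_subset hV.eStarClosed_compl (compl_subset_compl.mpr (subset_eStarCl V))

lemma mem_eStarClTheta_singleton {x y : X} :
    x ∈ eStarClTheta {y} ↔ ∀ U : Set X, EStarOpen U → x ∈ U → y ∈ eStarCl U := by
  simp only [eStarClTheta, mem_ofPred_eq, inter_singleton_nonempty]

theorem stmt14 (x y : X) (h : x ∈ eStarClTheta {y}) : y ∈ eStarClTheta {x} := by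
  rw [mem_eStarClTheta_singleton] at h ⊢
  intro V hV hyV
  by_contra hxV
  exact eStarCl_compl_eStarCl_subset hV (h _ (eStarClosed_eStarCl V) hxV) hyV
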